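/- Let (Ω, 𝔉, μ) be a probability space, let Gₙ, G₀ : Ω → ℝ^d be Bochner square-integrable random vectors, and let W : Ω → ℝ be a square-integrable random variable. Let θₙ, θ⁰, u ∈ ℝ^d be fixed vectors, η > 0, and A, C_w, C_g ≥ 0 constants such that: (i) ∫ ‖Gₙ − G₀‖² dμ ≤ A·‖θₙ − θ⁰‖²; (ii) ‖G₀(ω)‖ ≤ C_g for μ-almost every ω; (iii) ∫ (1 − W)² dμ ≤ C_w·‖θₙ − θ⁰‖². Define Jₙ := ∫ Gₙ dμ, J₀ := ∫ W·G₀ dμ, e := u − J₀, and v := Gₙ − W·G₀ + u. Then ∫ ‖θₙ + η·v − θ⁰‖² dμ ≤ [1 + η²·(2A + 2C_g²·C_w)]·‖θₙ − θ⁰‖² + 2η·⟨Jₙ, θₙ − θ⁰⟩ + 2η·⟨e, θₙ − θ⁰⟩ + 2η²·‖Jₙ‖² + 2η²·‖e‖². -/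

import Mathlib

open MeasureTheory RealInnerProductSpace
open scoped ENNReal

/-!
Write `δ = θn - θ0` and `X = Gn - W • G0 + u`, so that the new iterate is `θ0 + δ + η • X`.
Expanding the square gives `E‖δ + η X‖² = ‖δ‖² + 2η⟪δ, E X⟫ + η² E‖X‖²` with `E X = Jn + e`.
Translation by `u` does not change the variance, so `E‖X‖² ≤ E‖X - u‖² + ‖E X‖²`. Finally
`Gn - W G0 = (Gn - G0) + (1 - W) G0`, and the bound `‖G0‖ ≤ Cg` turns (i) and (iii) into
`E‖X - u‖² ≤ (2A + 2Cg²Cw)‖δ‖²`, while `‖Jn + e‖² ≤ 2‖Jn‖² + 2‖e‖²`.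
-/

theorem norm_add_sq_le_two_mul {E : Type*} [SeminormedAddCommGroup E] (a b : E) :
    ‖a + b‖ ^ 2 ≤ 2 * ‖a‖ ^ 2 + 2 * ‖b‖ ^ 2 := by
  calc ‖a + b‖ ^ 2 ≤ (‖a‖ + ‖b‖) ^ 2 := pow_le_pow_left₀ (norm_nonneg _) (norm_add_le a b) 2
    _ ≤ 2 * ‖a‖ ^ 2 + 2 * ‖b‖ ^ 2 := by linarith [add_sq_le (a := ‖a‖) (b := ‖b‖)]

namespace MeasureTheory

variable {Ω E : Type*} [MeasurableSpace Ω] {μ : Measure Ω}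

section NormedSpace

variable [NormedAddCommGroup E] [NormedSpace ℝ E]

theorem MemLp.smul_of_ae_norm_le {p : ℝ≥0∞} {W : Ω → ℝ} {G : Ω → E} {C : ℝ}
    (hW : MemLp W p μ) (hG : AEStronglyMeasurable G μ) (hbound : ∀ᵐ ω ∂μ, ‖G ω‖ ≤ C) :
    MemLp (fun ω => W ω • G ω) p μ :=
  (memLp_top_of_bound hG C hbound).smul hW

theorem integral_norm_sub_smul_sq_le [IsFiniteMeasure μ] {G G₀ : Ω → E} {W : Ω → ℝ} {C : ℝ}
    (hG : MemLp G 2 μ) (hG₀ : MemLp G₀ 2 μ) (hW : MemLp W 2 μ) (hbound : ∀ᵐ ω ∂μ, ‖G₀ ω‖ ≤ C) :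
    ∫ ω, ‖G ω - W ω • G₀ ω‖ ^ 2 ∂μ ≤
      2 * ∫ ω, ‖G ω - G₀ ω‖ ^ 2 ∂μ + 2 * C ^ 2 * ∫ ω, (1 - W ω) ^ 2 ∂μ := by
  have hdiff : Integrable (fun ω => ‖G ω - G₀ ω‖ ^ 2) μ :=
    (hG.sub hG₀).integrable_norm_pow two_ne_zero
  have hweight : Integrable (fun ω => (1 - W ω) ^ 2) μ := ((memLp_const 1).sub hW).integrable_sq
  have hpointwise : ∀ᵐ ω ∂μ,
      ‖G ω - W ω • G₀ ω‖ ^ 2 ≤ 2 * ‖G ω - G₀ ω‖ ^ 2 + 2 * C ^ 2 * (1 - W ω) ^ 2 := by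
    filter_upwards [hbound] with ω hω
    have hsplit : G ω - W ω • G₀ ω = (G ω - G₀ ω) + (1 - W ω) • G₀ ω := by
      rw [sub_smul, one_smul]; abel
    have hscaled : ‖(1 - W ω) • G₀ ω‖ ^ 2 ≤ C ^ 2 * (1 - W ω) ^ 2 := by
      rw [norm_smul, Real.norm_eq_abs, mul_pow, sq_abs, mul_comm]
      gcongr
    rw [hsplit]
    linarith [norm_add_sq_le_two_mul (G ω - G₀ ω) ((1 - W ω) • G₀ ω)]
  calc ∫ ω, ‖G ω - W ω • G₀ ω‖ ^ 2 ∂μ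
      ≤ ∫ ω, (2 * ‖G ω - G₀ ω‖ ^ 2 + 2 * C ^ 2 * (1 - W ω) ^ 2) ∂μ :=
        integral_mono_ae ((hG.sub (hW.smul_of_ae_norm_le hG₀.1 hbound)).integrable_norm_pow
          two_ne_zero) ((hdiff.const_mul 2).add (hweight.const_mul _)) hpointwise
    _ = 2 * ∫ ω, ‖G ω - G₀ ω‖ ^ 2 ∂μ + 2 * C ^ 2 * ∫ ω, (1 - W ω) ^ 2 ∂μ := by
        rw [integral_add (hdiff.const_mul 2) (hweight.const_mul _), integral_const_mul,
          integral_const_mul]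

end NormedSpace

variable [NormedAddCommGroup E] [InnerProductSpace ℝ E] [CompleteSpace E] [IsProbabilityMeasure μ]

theorem integral_norm_add_smul_sq {X : Ω → E} (hX : MemLp X 2 μ) (c : E) (t : ℝ) :
    ∫ ω, ‖c + t • X ω‖ ^ 2 ∂μ =
      ‖c‖ ^ 2 + 2 * t * ⟪c, ∫ ω, X ω ∂μ⟫ + t ^ 2 * ∫ ω, ‖X ω‖ ^ 2 ∂μ := by
  have hXi : Integrable X μ := hX.integrable one_le_two
  have hinner : Integrable (fun ω => 2 * t * ⟪c, X ω⟫) μ := (hXi.const_inner c).const_mul _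
  have hsq : Integrable (fun ω => t ^ 2 * ‖X ω‖ ^ 2) μ :=
    (hX.integrable_norm_pow two_ne_zero).const_mul _
  have hlinear : Integrable (fun ω => ‖c‖ ^ 2 + 2 * t * ⟪c, X ω⟫) μ :=
    (integrable_const _).add hinner
  have hpointwise : ∀ ω, ‖c + t • X ω‖ ^ 2 = ‖c‖ ^ 2 + 2 * t * ⟪c, X ω⟫ + t ^ 2 * ‖X ω‖ ^ 2 := by
    intro ω
    rw [norm_add_sq_real, real_inner_smul_right, norm_smul, Real.norm_eq_abs, mul_pow, sq_abs]
    ring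
  simp_rw [hpointwise]
  rw [integral_add hlinear hsq, integral_add (integrable_const _) hinner, integral_const,
    integral_const_mul, integral_const_mul, integral_inner hXi]
  simp

theorem integral_norm_add_const_sq_le {Y : Ω → E} (hY : MemLp Y 2 μ) (u : E) :
    ∫ ω, ‖Y ω + u‖ ^ 2 ∂μ ≤ ∫ ω, ‖Y ω‖ ^ 2 ∂μ + ‖∫ ω, (Y ω + u) ∂μ‖ ^ 2 := by
  have hexpand := integral_norm_add_smul_sq hY u 1
  simp only [one_smul, one_pow, one_mul, mul_one] at hexpand
  rw [integral_add (hY.integrable one_le_two) (integrable_const u), integral_const, probReal_univ,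
    one_smul]
  simp_rw [add_comm (Y _) u]
  rw [hexpand, add_comm _ u, norm_add_sq_real]
  linarith [sq_nonneg ‖∫ ω, Y ω ∂μ‖]

end MeasureTheory

theorem one_step_distance_expansion_general
    {Ω : Type*} [MeasurableSpace Ω] (μ : Measure Ω) [IsProbabilityMeasure μ]
    {d : ℕ} (Gn G0 : Ω → EuclideanSpace ℝ (Fin d)) (W : Ω → ℝ)
    (hGn : MemLp Gn 2 μ) (hG0 : MemLp G0 2 μ) (hW : MemLp W 2 μ)
    (θn θ0 u : EuclideanSpace ℝ (Fin d)) (η : ℝ) (A Cw Cg : ℝ)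
    (h1 : ∫ ω, ‖Gn ω - G0 ω‖ ^ 2 ∂μ ≤ A * ‖θn - θ0‖ ^ 2)
    (h2 : ∀ᵐ ω ∂μ, ‖G0 ω‖ ≤ Cg)
    (h3 : ∫ ω, (1 - W ω) ^ 2 ∂μ ≤ Cw * ‖θn - θ0‖ ^ 2) :
    ∫ ω, ‖θn + η • (Gn ω - W ω • G0 ω + u) - θ0‖ ^ 2 ∂μ ≤
      (1 + η ^ 2 * (2 * A + 2 * Cg ^ 2 * Cw)) * ‖θn - θ0‖ ^ 2 +
        2 * η * ⟪∫ ω, Gn ω ∂μ, θn - θ0⟫ +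
        2 * η * ⟪u - ∫ ω, W ω • G0 ω ∂μ, θn - θ0⟫ +
        2 * η ^ 2 * ‖∫ ω, Gn ω ∂μ‖ ^ 2 +
        2 * η ^ 2 * ‖u - ∫ ω, W ω • G0 ω ∂μ‖ ^ 2 := by
  set δ := θn - θ0
  set Jn := ∫ ω, Gn ω ∂μ
  set e := u - ∫ ω, W ω • G0 ω ∂μ
  have hWG0 := hW.smul_of_ae_norm_le hG0.1 h2
  have hY : MemLp (fun ω => Gn ω - W ω • G0 ω) 2 μ := hGn.sub hWG0
  have hX : MemLp (fun ω => Gn ω - W ω • G0 ω + u) 2 μ := hY.add (memLp_const u)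
  have hmean : ∫ ω, (Gn ω - W ω • G0 ω + u) ∂μ = Jn + e := by
    rw [integral_add (hY.integrable one_le_two) (integrable_const u),
      integral_sub (hGn.integrable one_le_two) (hWG0.integrable one_le_two), integral_const]
    simp only [probReal_univ, one_smul, Jn, e]
    abel
  have hsecond : ∫ ω, ‖Gn ω - W ω • G0 ω + u‖ ^ 2 ∂μ ≤
      (2 * A + 2 * Cg ^ 2 * Cw) * ‖δ‖ ^ 2 + 2 * ‖Jn‖ ^ 2 + 2 * ‖e‖ ^ 2 := by
    have hcentered := integral_norm_sub_smul_sq_le hGn hG0 hW h2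
    have hweighted := mul_le_mul_of_nonneg_left h3 (sq_nonneg Cg)
    have hvariance := integral_norm_add_const_sq_le hY u
    rw [hmean] at hvariance
    linarith [norm_add_sq_le_two_mul Jn e]
  have hshift : ∀ ω, θn + η • (Gn ω - W ω • G0 ω + u) - θ0 = δ + η • (Gn ω - W ω • G0 ω + u) :=
    fun ω => add_sub_right_comm _ _ _
  simp_rw [hshift]
  rw [integral_norm_add_smul_sq hX δ η, hmean, inner_add_right,
    real_inner_comm δ Jn, real_inner_comm δ e]
  linarith [mul_le_mul_of_nonneg_left hsecond (sq_nonneg η)]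

/-- Single-step expansion of the expected squared distance to the snapshot
parameter after one semi-stochastic gradient step (paper's equation B.5-1). -/
theorem one_step_distance_expansion
    {Ω : Type*} [MeasurableSpace Ω] (μ : Measure Ω) [IsProbabilityMeasure μ]
    {d : ℕ} (Gn G0 : Ω → EuclideanSpace ℝ (Fin d)) (W : Ω → ℝ)
    (hGn : MemLp Gn 2 μ) (hG0 : MemLp G0 2 μ) (hW : MemLp W 2 μ)
    (θn θ0 u : EuclideanSpace ℝ (Fin d)) (η : ℝ) (hη : 0 < η) (A Cw Cg : ℝ)
    (hA : 0 ≤ A) (hCw : 0 ≤ Cw) (hCg : 0 ≤ Cg)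
    (h1 : ∫ ω, ‖Gn ω - G0 ω‖ ^ 2 ∂μ ≤ A * ‖θn - θ0‖ ^ 2)
    (h2 : ∀ᵐ ω ∂μ, ‖G0 ω‖ ≤ Cg)
    (h3 : ∫ ω, (1 - W ω) ^ 2 ∂μ ≤ Cw * ‖θn - θ0‖ ^ 2) :
    ∫ ω, ‖θn + η • (Gn ω - W ω • G0 ω + u) - θ0‖ ^ 2 ∂μ ≤
      (1 + η ^ 2 * (2 * A + 2 * Cg ^ 2 * Cw)) * ‖θn - θ0‖ ^ 2 +
        2 * η * ⟪∫ ω, Gn ω ∂μ, θn - θ0⟫ +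
        2 * η * ⟪u - ∫ ω, W ω • G0 ω ∂μ, θn - θ0⟫ +
        2 * η ^ 2 * ‖∫ ω, Gn ω ∂μ‖ ^ 2 +
        2 * η ^ 2 * ‖u - ∫ ω, W ω • G0 ω ∂μ‖ ^ 2 :=
  one_step_distance_expansion_general μ Gn G0 W hGn hG0 hW θn θ0 u η A Cw Cg h1 h2 h3
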